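/- arXiv:1001.3546 — 5 statements merged into one kernel-verified Lean document; each statement's English description precedes it below -/
import Mathlib

section
/- Let A and B be conjugate unit quaternions in a quaternion algebra H=(μ,ν/k). Then the k-subalgebra of H generated by A and B coincides with the k-linear span of {1, A⁻, B⁻, (A⁻B⁻)⁻}. -/
open Quaternion

set_option maxHeartbeats 1600000 in
/-- For conjugate unit quaternions `A, B` in `H = (μ,ν/k)`, the `k`-subalgebra generated by
`A` and `B` equals the `k`-span of `{1, A⁻, B⁻, (A⁻B⁻)⁻}`. -/
theorem adjoin_eq_span_of_conjugate_units (k : Type*) [Field k] [CharZero k] (μ ν : k)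
    (A B C : ℍ[k, μ, ν]) (hA : A * star A = 1) (hB : B * star B = 1)
    (hC : C * star C = 1) (hconj : B = C * A * star C) :
    Subalgebra.toSubmodule (Algebra.adjoin k ({A, B} : Set ℍ[k, μ, ν])) =
      Submodule.span k ({1, A - algebraMap k ℍ[k, μ, ν] A.re,
        B - algebraMap k ℍ[k, μ, ν] B.re,
        (A - algebraMap k ℍ[k, μ, ν] A.re) * (B - algebraMap k ℍ[k, μ, ν] B.re) -
          algebraMap k ℍ[k, μ, ν]
            (((A - algebraMap k ℍ[k, μ, ν] A.re) *
              (B - algebraMap k ℍ[k, μ, ν] B.re)).re)} : Set ℍ[k, μ, ν]) := by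
  set a := A - algebraMap k ℍ[k, μ, ν] A.re with ha_def
  set b := B - algebraMap k ℍ[k, μ, ν] B.re with hb_def
  set p := a * b - algebraMap k ℍ[k, μ, ν] ((a * b).re) with hp_def
  set V := Submodule.span k ({1, a, b, p} : Set ℍ[k, μ, ν]) with hV
  have h1 : (1 : ℍ[k, μ, ν]) ∈ V := Submodule.subset_span (by simp)
  have haV : a ∈ V := Submodule.subset_span (by simp)
  have hbV : b ∈ V := Submodule.subset_span (by simp)
  have hpV : p ∈ V := Submodule.subset_span (by simp)
  have haa : a * a = ((a * a).re) • (1 : ℍ[k, μ, ν]) := by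
    simp only [hp_def, ha_def, hb_def]; ext <;> simp <;> ring
  have hbb : b * b = ((b * b).re) • (1 : ℍ[k, μ, ν]) := by
    simp only [hp_def, ha_def, hb_def]; ext <;> simp <;> ring
  have hab : a * b = ((a * b).re) • (1 : ℍ[k, μ, ν]) + p := by
    simp only [hp_def, ha_def, hb_def]; ext <;> simp <;> ring
  have hba : b * a = ((a * b).re) • (1 : ℍ[k, μ, ν]) - p := by
    simp only [hp_def, ha_def, hb_def]; ext <;> simp <;> ring
  have hap : a * p = ((a * a).re) • b - ((a * b).re) • a := by
    simp only [hp_def, ha_def, hb_def]; ext <;> simp <;> ring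
  have hpa : p * a = ((a * b).re) • a - ((a * a).re) • b := by
    simp only [hp_def, ha_def, hb_def]; ext <;> simp <;> ring
  have hbp : b * p = ((a * b).re) • b - ((b * b).re) • a := by
    simp only [hp_def, ha_def, hb_def]; ext <;> simp <;> ring
  have hpb : p * b = ((b * b).re) • a - ((a * b).re) • b := by
    simp only [hp_def, ha_def, hb_def]; ext <;> simp <;> ring
  have hpp : p * p = (((a * b).re) ^ 2 - (a * a).re * (b * b).re) • (1 : ℍ[k, μ, ν]) := by
    simp only [hp_def, ha_def, hb_def]; ext <;> simp <;> ring
  have hmul : ∀ x y : ℍ[k, μ, ν], x ∈ V → y ∈ V → x * y ∈ V := by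
    have hle : V * V ≤ V := by
      rw [hV, Submodule.span_mul_span, Submodule.span_le]
      rintro x hx
      rw [Set.mem_mul] at hx
      obtain ⟨u, hu, v, hv, rfl⟩ := hx
      simp only [Set.mem_insert_iff, Set.mem_singleton_iff] at hu hv
      have goal : ∀ w : ℍ[k, μ, ν], w ∈ V → w ∈ (Submodule.span k ({1, a, b, p} :
        Set ℍ[k, μ, ν]) : Submodule k ℍ[k, μ, ν]) := fun w hw => hw
      rcases hu with rfl | rfl | rfl | rfl <;> rcases hv with rfl | rfl | rfl | rfl
      · rw [one_mul]; exact goal _ h1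
      · rw [one_mul]; exact goal _ haV
      · rw [one_mul]; exact goal _ hbV
      · rw [one_mul]; exact goal _ hpV
      · rw [mul_one]; exact goal _ haV
      · rw [haa]; exact goal _ (Submodule.smul_mem _ _ h1)
      · rw [hab]; exact goal _ (add_mem (Submodule.smul_mem _ _ h1) hpV)
      · rw [hap]
        exact goal _ (sub_mem (Submodule.smul_mem _ _ hbV) (Submodule.smul_mem _ _ haV))
      · rw [mul_one]; exact goal _ hbV
      · rw [hba]; exact goal _ (sub_mem (Submodule.smul_mem _ _ h1) hpV)
      · rw [hbb]; exact goal _ (Submodule.smul_mem _ _ h1)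
      · rw [hbp]
        exact goal _ (sub_mem (Submodule.smul_mem _ _ hbV) (Submodule.smul_mem _ _ haV))
      · rw [mul_one]; exact goal _ hpV
      · rw [hpa]
        exact goal _ (sub_mem (Submodule.smul_mem _ _ haV) (Submodule.smul_mem _ _ hbV))
      · rw [hpb]
        exact goal _ (sub_mem (Submodule.smul_mem _ _ haV) (Submodule.smul_mem _ _ hbV))
      · rw [hpp]; exact goal _ (Submodule.smul_mem _ _ h1)
    exact fun x y hx hy => hle (Submodule.mul_mem_mul hx hy)
  apply le_antisymm
  · intro x hx
    have hadj : Algebra.adjoin k ({A, B} : Set ℍ[k, μ, ν]) ≤ V.toSubalgebra h1 hmul := by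
      apply Algebra.adjoin_le
      rintro y (rfl | rfl)
      · show y ∈ V
        have hy : y = y.re • (1 : ℍ[k, μ, ν]) + a := by
          simp only [ha_def]; ext <;> simp
        rw [hy]
        exact add_mem (Submodule.smul_mem _ _ h1) haV
      · show y ∈ V
        have hy : y = y.re • (1 : ℍ[k, μ, ν]) + b := by
          simp only [hb_def]; ext <;> simp
        rw [hy]
        exact add_mem (Submodule.smul_mem _ _ h1) hbV
    exact hadj hx
  · rw [Submodule.span_le]
    rintro x hx
    simp only [Set.mem_insert_iff, Set.mem_singleton_iff] at hx
    have hAmem : A ∈ Algebra.adjoin k ({A, B} : Set ℍ[k, μ, ν]) :=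
      Algebra.subset_adjoin (by simp)
    have hBmem : B ∈ Algebra.adjoin k ({A, B} : Set ℍ[k, μ, ν]) :=
      Algebra.subset_adjoin (by simp)
    have haMem : a ∈ Algebra.adjoin k ({A, B} : Set ℍ[k, μ, ν]) :=
      sub_mem hAmem (Subalgebra.algebraMap_mem _ _)
    have hbMem : b ∈ Algebra.adjoin k ({A, B} : Set ℍ[k, μ, ν]) :=
      sub_mem hBmem (Subalgebra.algebraMap_mem _ _)
    suffices hx' : x ∈ Algebra.adjoin k ({A, B} : Set ℍ[k, μ, ν]) from hx'
    rcases hx with rfl | rfl | rfl | rfl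
    · exact one_mem _
    · exact haMem
    · exact hbMem
    · exact sub_mem (mul_mem haMem hbMem) (Subalgebra.algebraMap_mem _ _)
end

section
/- Let A, B ∈ SL(2,ℂ) correspond to quaternions with equal scalar part x₀ (i.e., tr(A)=tr(B)=2x₀) and set y₀ = x₀² − tr(AB)/2. If x₀²≠1 and A, B are in the normal form A = diag(x₀+√(x₀²−1), x₀−√(x₀²−1)), B = [[x₀−y₀/√(x₀²−1), (y₀²−(1−x₀²)²)/(1−x₀²)],[1, x₀+y₀/√(x₀²−1)]], then the pure parts A⁻ = A − x₀·Id, B⁻ = B − x₀·Id and the pure part of A⁻B⁻ span a 3-dimensional space (i.e., together with Id form a basis of M(2,ℂ)) if and only if y₀² ≠ (1−x₀²)². -/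
open Matrix

/-- For the normal-form pair `A, B` in `SL(2,ℂ)` with `tr A = tr B = 2x₀`, `x₀² ≠ 1`, the
pure parts `A⁻ = A − x₀·Id`, `B⁻ = B − x₀·Id` and the pure part of `A⁻B⁻`, together with
`Id`, form a basis of `M(2,ℂ)` iff `y₀² ≠ (1−x₀²)²`. -/
theorem sl2C_normal_form_basis_iff (x₀ y₀ r : ℂ)
    (hx : x₀ ^ 2 ≠ 1) (hr : r ^ 2 = x₀ ^ 2 - 1)
    (A B : Matrix (Fin 2) (Fin 2) ℂ)
    (hA : A = !![x₀ + r, 0; 0, x₀ - r])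
    (hB : B = !![x₀ - y₀ / r, (y₀ ^ 2 - (1 - x₀ ^ 2) ^ 2) / (1 - x₀ ^ 2); 1, x₀ + y₀ / r]) :
    ∀ Am Bm P : Matrix (Fin 2) (Fin 2) ℂ,
      Am = A - x₀ • (1 : Matrix (Fin 2) (Fin 2) ℂ) →
      Bm = B - x₀ • (1 : Matrix (Fin 2) (Fin 2) ℂ) →
      P = Am * Bm - ((Am * Bm).trace / 2) • (1 : Matrix (Fin 2) (Fin 2) ℂ) →
      ((LinearIndependent ℂ ![(1 : Matrix (Fin 2) (Fin 2) ℂ), Am, Bm, P] ∧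
        Submodule.span ℂ (Set.range ![(1 : Matrix (Fin 2) (Fin 2) ℂ), Am, Bm, P]) = ⊤) ↔
      y₀ ^ 2 ≠ (1 - x₀ ^ 2) ^ 2) := by
  have hx1 : (1 : ℂ) - x₀ ^ 2 ≠ 0 := fun h => hx (by linear_combination -h)
  have hr0 : r ≠ 0 := fun h => hx (by linear_combination -hr + r * h)
  set c : ℂ := (y₀ ^ 2 - (1 - x₀ ^ 2) ^ 2) / (1 - x₀ ^ 2) with hc
  intro Am Bm P hAm hBm hP
  have hAm' : Am = !![r, 0; 0, -r] := by
    subst hA; rw [hAm]; ext i j; fin_cases i <;> fin_cases j <;>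
      simp [Matrix.one_apply]
  have hBm' : Bm = !![-y₀ / r, c; 1, y₀ / r] := by
    subst hB; rw [hBm]; ext i j; fin_cases i <;> fin_cases j <;>
      simp [Matrix.one_apply] <;> ring
  have hP' : P = !![0, r * c; -r, 0] := by
    rw [hP, hAm', hBm']
    have hprod : (!![r, 0; 0, -r] : Matrix (Fin 2) (Fin 2) ℂ) * !![-y₀ / r, c; 1, y₀ / r]
        = !![-y₀, r * c; -r, -y₀] := by
      ext i j; fin_cases i <;> fin_cases j <;>
        simp [Matrix.mul_apply, Fin.sum_univ_two] <;> field_simp <;> ring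
    rw [hprod]
    ext i j; fin_cases i <;> fin_cases j <;>
      simp [Matrix.trace_fin_two, Matrix.one_apply] <;> ring
  rw [hAm', hBm', hP']
  constructor
  · rintro ⟨hli, -⟩ h
    have hcz : c = 0 := by rw [hc, sub_eq_zero.mpr h, zero_div]
    have h3 := Fintype.linearIndependent_iff.mp hli ![0, y₀ / r, r, 1] ?_ 3
    · simpa using h3
    · rw [Fin.sum_univ_four]
      ext i j
      fin_cases i <;> fin_cases j <;>
        simp [hcz, Matrix.one_apply] <;> ring_nf <;> field_simp
  · intro h
    have hcne : c ≠ 0 := div_ne_zero (sub_ne_zero.mpr h) hx1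
    have hli : LinearIndependent ℂ ![(1 : Matrix (Fin 2) (Fin 2) ℂ), !![r, 0; 0, -r],
        !![-y₀ / r, c; 1, y₀ / r], !![0, r * c; -r, 0]] := by
      rw [Fintype.linearIndependent_iff]
      intro g hg
      rw [Fin.sum_univ_four] at hg
      have h00 := congrFun (congrFun hg 0) 0
      have h01 := congrFun (congrFun hg 0) 1
      have h10 := congrFun (congrFun hg 1) 0
      have h11 := congrFun (congrFun hg 1) 1
      simp [Matrix.one_apply] at h00 h01 h10 h11
      have hg3 : g 3 = 0 := by
        have h2 : (2 * c * r) * g 3 = 0 := by linear_combination h01 - c * h10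
        rcases mul_eq_zero.mp h2 with h3 | h3
        · exact absurd h3 (mul_ne_zero (mul_ne_zero two_ne_zero hcne) hr0)
        · exact h3
      have hg2 : g 2 = 0 := by linear_combination h10 + r * hg3
      rw [hg2] at h00 h11
      simp at h00 h11
      have hg0 : g 0 = 0 := by linear_combination (1/2 : ℂ) * h00 + (1/2 : ℂ) * h11
      have hg1 : g 1 = 0 := by
        have h2 : 2 * r * g 1 = 0 := by linear_combination h00 - h11
        rcases mul_eq_zero.mp h2 with h3 | h3
        · exact absurd h3 (mul_ne_zero two_ne_zero hr0)
        · exact h3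
      intro i; fin_cases i <;> assumption
    refine ⟨hli, hli.span_eq_top_of_card_eq_finrank ?_⟩
    simp [Module.finrank_matrix]
end

section
/- Let G be the trefoil knot group with presentation ⟨a,b | aba = bab⟩, and let ρ: G → SL(2,ℂ) be a representation with ρ(a)=A, ρ(b)=B, tr(A)=tr(B)=2x, and set y = x² − tr(AB)/2. If ABA = BAB and the pair (A,B) is irreducible (equivalently y² ≠ (1−x²)²), then 2x² − 2y − 1 = 0. Conversely, for any (x,y) ∈ ℂ² with 2x²−2y−1=0 and y² ≠ (1−x²)², there exist A,B ∈ SL(2,ℂ) with tr(A)=tr(B)=2x, tr(AB)=2(x²−y), and ABA=BAB. -/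
open Matrix

/-!
Writing `t = tr A = tr B` and `s = tr (AB)`, Cayley–Hamilton computes `tr (ABAB)` in two ways:
as `s² - 2`, and, after rewriting `ABAB = BABB` by the braid relation, as `t (t s - t) - s`.
Hence `(s - 1)(s - t² + 2) = 0`. The root `s = 1` is the curve `2x² - 2y - 1 = 0`; the other
root `s = t² - 2` means `y = 1 - x²`, which is excluded. Conversely, with `i² = -1` the pair
`A = [[0, -1], [1, t]]`, `B = [[t + i, i t], [-1, -i]]` has `AB = [[1, i], [i, 0]]` and satisfies
the braid relation.
-/

namespace Matrix

variable {R : Type*} [CommRing R]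

theorem mul_self_fin_two (M : Matrix (Fin 2) (Fin 2) R) :
    M * M = M.trace • M - M.det • (1 : Matrix (Fin 2) (Fin 2) R) := by
  ext i j
  fin_cases i <;> fin_cases j <;>
    simp [mul_apply, trace_fin_two, det_fin_two] <;> ring

theorem trace_mul_self_fin_two (M : Matrix (Fin 2) (Fin 2) R) :
    (M * M).trace = M.trace ^ 2 - 2 * M.det := by
  rw [mul_self_fin_two, trace_sub, trace_smul, trace_smul, trace_one]
  simp only [Fintype.card_fin, smul_eq_mul, Nat.cast_ofNat]
  ring

theorem trace_mul_sub_one_mul_eq_zero_of_braid {A B : Matrix (Fin 2) (Fin 2) R}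
    (hA : A.det = 1) (hB : B.det = 1) (htr : A.trace = B.trace) (hbraid : A * B * A = B * A * B) :
    ((A * B).trace - 1) * ((A * B).trace - A.trace ^ 2 + 2) = 0 := by
  set t := A.trace
  set s := (A * B).trace
  have hsq : (A * B * (A * B)).trace = s ^ 2 - 2 := by
    rw [trace_mul_self_fin_two, det_mul, hA, hB]
    ring
  have hABA : (A * B * A).trace = t * s - t := by
    rw [trace_mul_comm (A * B) A, ← mul_assoc, mul_self_fin_two, hA, sub_mul, smul_mul,
      one_smul, one_mul, trace_sub, trace_smul, ← htr, smul_eq_mul]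
  have hABAB : A * B * (A * B) = t • (A * B * A) - B * A := by
    calc A * B * (A * B) = B * A * (B * B) := by
          rw [← mul_assoc, hbraid, mul_assoc]
      _ = t • (B * A * B) - B * A := by
          rw [mul_self_fin_two, hB, ← htr, one_smul, mul_sub, mul_smul_comm, mul_one, mul_assoc]
      _ = t • (A * B * A) - B * A := by rw [hbraid]
  have hsq' : (A * B * (A * B)).trace = t * (t * s - t) - s := by
    rw [hABAB, trace_sub, trace_smul, hABA, trace_mul_comm B A, smul_eq_mul]
  linear_combination hsq.symm.trans hsq'

theorem exists_braid_pair_trace_mul_eq_one {i : R} (hi : i * i = -1) (t : R) :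
    ∃ A B : Matrix (Fin 2) (Fin 2) R, A.det = 1 ∧ B.det = 1 ∧ A.trace = t ∧ B.trace = t ∧
      (A * B).trace = 1 ∧ A * B * A = B * A * B := by
  have hAB : !![0, -1; 1, t] * !![t + i, i * t; -1, -i] = !![1, i; i, (0 : R)] := by
    rw [mul_fin_two]
    simp only [EmbeddingLike.apply_eq_iff_eq, vecCons_inj, and_true]
    refine ⟨⟨?_, ?_⟩, ?_, ?_⟩ <;> ring
  refine ⟨!![0, -1; 1, t], !![t + i, i * t; -1, -i], ?_, ?_, ?_, ?_, ?_, ?_⟩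
  · simp [det_fin_two_of]
  · rw [det_fin_two_of]
    linear_combination -hi
  · simp [trace_fin_two_of]
  · simp [trace_fin_two_of]
  · simp [hAB, trace_fin_two_of]
  · have hBraid : !![1, i; i, (0 : R)] * !![0, -1; 1, t] =
        !![t + i, i * t; -1, -i] * !![1, i; i, 0] := by
      rw [mul_fin_two, mul_fin_two]
      simp only [EmbeddingLike.apply_eq_iff_eq, vecCons_inj, and_true]
      refine ⟨⟨?_, ?_⟩, ?_, ?_⟩
      · linear_combination -t * hi
      · linear_combination -hi
      · linear_combination hi
      · ring
    rw [hAB, mul_assoc, hAB, hBraid]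

end Matrix

/-- Trefoil knot group `⟨a,b | aba = bab⟩`: an irreducible `SL(2,ℂ)` representation with
`tr A = tr B = 2x`, `y = x² − tr(AB)/2` satisfies `2x² − 2y − 1 = 0`; conversely every
`(x,y)` on this curve with `y² ≠ (1−x²)²` is realized. -/
theorem trefoil_representation_variety :
    (∀ (A B : Matrix (Fin 2) (Fin 2) ℂ) (x y : ℂ),
      A.det = 1 → B.det = 1 → A.trace = 2 * x → B.trace = 2 * x →
      y = x ^ 2 - (A * B).trace / 2 → A * B * A = B * A * B →
      y ^ 2 ≠ (1 - x ^ 2) ^ 2 → 2 * x ^ 2 - 2 * y - 1 = 0) ∧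
    (∀ x y : ℂ, 2 * x ^ 2 - 2 * y - 1 = 0 → y ^ 2 ≠ (1 - x ^ 2) ^ 2 →
      ∃ A B : Matrix (Fin 2) (Fin 2) ℂ, A.det = 1 ∧ B.det = 1 ∧
        A.trace = 2 * x ∧ B.trace = 2 * x ∧ (A * B).trace = 2 * (x ^ 2 - y) ∧
        A * B * A = B * A * B) := by
  refine ⟨fun A B x y hA hB htA htB hy hbraid hirr => ?_, fun x y hcurve _ => ?_⟩
  · have hroots := trace_mul_sub_one_mul_eq_zero_of_braid hA hB (htA.trans htB.symm) hbraid
    rw [htA] at hroots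
    rcases mul_eq_zero.mp hroots with hs | hs
    · linear_combination -2 * hy + hs
    · exact absurd (by linear_combination (y + 1 - x ^ 2) * hy - (y + 1 - x ^ 2) / 2 * hs) hirr
  · obtain ⟨A, B, hA, hB, htA, htB, hAB, hbraid⟩ :=
      exists_braid_pair_trace_mul_eq_one Complex.I_mul_I (2 * x)
    exact ⟨A, B, hA, hB, htA, htB, by rw [hAB]; linear_combination -hcurve, hbraid⟩
end

section
/- Let G be the figure-eight knot group with presentation ⟨a,b | aw = wb⟩ where w = ba⁻¹b⁻¹a. For A,B ∈ SL(2,ℂ) with tr(A)=tr(B)=2x and y = x² − tr(AB)/2, if A·w(A,B) = w(A,B)·B and the pair (A,B) is irreducible (y² ≠ (1−x²)²), then 1 − 6x² + 4x⁴ − 2y − 4y² = 0. -/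
open Matrix

/-- Figure-eight knot group `⟨a,b | aw = wb⟩`, `w = ba⁻¹b⁻¹a`: an irreducible `SL(2,ℂ)`
representation with `tr A = tr B = 2x` and `y = x² − tr(AB)/2` satisfies
`1 − 6x² + 4x⁴ − 2y − 4y² = 0`. -/
theorem figure_eight_representation_variety (A B : Matrix (Fin 2) (Fin 2) ℂ) (x y : ℂ)
    (hA : A.det = 1) (hB : B.det = 1)
    (htA : A.trace = 2 * x) (htB : B.trace = 2 * x)
    (hy : y = x ^ 2 - (A * B).trace / 2)
    (hrel : A * (B * A⁻¹ * B⁻¹ * A) = (B * A⁻¹ * B⁻¹ * A) * B)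
    (hirr : y ^ 2 ≠ (1 - x ^ 2) ^ 2) :
    1 - 6 * x ^ 2 + 4 * x ^ 4 - 2 * y - 4 * y ^ 2 = 0 := by
  obtain ⟨a, b, c, d, rfl⟩ : ∃ a b c d, A = !![a, b; c, d] :=
    ⟨_, _, _, _, Matrix.eta_fin_two A⟩
  obtain ⟨e, f, g, h, rfl⟩ : ∃ e f g h, B = !![e, f; g, h] :=
    ⟨_, _, _, _, Matrix.eta_fin_two B⟩
  rw [Matrix.det_fin_two_of] at hA hB
  rw [Matrix.trace_fin_two_of] at htA htB
  have hd : d = 2 * x - a := by linear_combination htA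
  have hh : h = 2 * x - e := by linear_combination htB
  subst hd hh
  have hbc : b * c = 2 * a * x - a ^ 2 - 1 := by first | ring1 | linear_combination hA | linear_combination -hA | linear_combination 2 * hA | linear_combination -2 * hA
  have hfg : f * g = 2 * e * x - e ^ 2 - 1 := by first | ring1 | linear_combination hB | linear_combination -hB | linear_combination 2 * hB | linear_combination -2 * hB
  have hy3 : 2 * y - 2 * x ^ 2 + (a * e + b * g + c * f + (2 * x - a) * (2 * x - e)) = 0 := by
    simp [Matrix.trace_fin_two, Matrix.mul_apply, Fin.sum_univ_two] at hy
    linear_combination 2 * hy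
  have hAinv : (!![a, b; c, 2 * x - a])⁻¹ = !![2 * x - a, -b; -c, a] := by
    apply Matrix.inv_eq_right_inv
    ext i j
    fin_cases i <;> fin_cases j <;>
      simp [Matrix.mul_apply, Fin.sum_univ_two, Matrix.one_apply] <;>
      first | ring1 | linear_combination hA | linear_combination -hA | linear_combination 2 * hA | linear_combination -2 * hA
  have hBinv : (!![e, f; g, 2 * x - e])⁻¹ = !![2 * x - e, -f; -g, e] := by
    apply Matrix.inv_eq_right_inv
    ext i j
    fin_cases i <;> fin_cases j <;>
      simp [Matrix.mul_apply, Fin.sum_univ_two, Matrix.one_apply] <;>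
      first | ring1 | linear_combination hB | linear_combination -hB | linear_combination 2 * hB | linear_combination -2 * hB
  rw [hAinv, hBinv] at hrel
  have key : !![a, b; c, 2 * x - a] *
        (!![e, f; g, 2 * x - e] * !![2 * x - a, -b; -c, a] * !![2 * x - e, -f; -g, e] *
          !![a, b; c, 2 * x - a]) -
        (!![e, f; g, 2 * x - e] * !![2 * x - a, -b; -c, a] * !![2 * x - e, -f; -g, e] *
          !![a, b; c, 2 * x - a]) * !![e, f; g, 2 * x - e] =
      (1 - 6 * x ^ 2 + 4 * x ^ 4 - 2 * y - 4 * y ^ 2) •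
        (!![e, f; g, 2 * x - e] - !![a, b; c, 2 * x - a]) := by
    simp only [Matrix.mul_fin_two]
    ext i j
    fin_cases i <;> fin_cases j <;>
      simp [Matrix.sub_apply, Matrix.smul_apply]
    · linear_combination ((1:ℂ) * e + (2:ℂ) * e * y + (-2:ℂ) * e * x^2 + (2:ℂ) * e^2 * x + (-1:ℂ) * c * e * f + (-1:ℂ) * b * e * g + (-1:ℂ) * a + (-2:ℂ) * a * y + (2:ℂ) * a * x^2 + (-2:ℂ) * a * e^2 + (1:ℂ) * a * c * f + (1:ℂ) * a * b * g + (-2:ℂ) * a^2 * x + (2:ℂ) * a^2 * e) * hy3 + ((1:ℂ) * e + (2:ℂ) * e * f * g + (-2:ℂ) * e^2 * x + (2:ℂ) * e^3 + (2:ℂ) * c * f * x + (-1:ℂ) * c * e * f + (-1:ℂ) * b * e * g + (-4:ℂ) * a * x^2 + (-1:ℂ) * a * f * g + (6:ℂ) * a * e * x + (-3:ℂ) * a * e^2) * hbc + ((-2:ℂ) * e + (4:ℂ) * e * x^2 + (-2:ℂ) * c * f * x + (-1:ℂ) * b * c * e + (1:ℂ) * a + (-2:ℂ) * a * e * x + (1:ℂ)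 * a * c * f + (1:ℂ) * a * b * g + (-2:ℂ) * a^2 * x + (1:ℂ) * a^2 * e) * hfg
    · linear_combination ((2:ℂ) * f * y + (-2:ℂ) * f * x^2 + (2:ℂ) * e * f * x + (-1:ℂ) * c * f^2 + (-1:ℂ) * b + (-2:ℂ) * b * y + (2:ℂ) * b * x^2 + (-1:ℂ) * b * f * g + (-2:ℂ) * b * e * x + (1:ℂ) * b^2 * g + (4:ℂ) * a * f * x + (-2:ℂ) * a * e * f + (-2:ℂ) * a * b * x + (2:ℂ) * a * b * e + (-1:ℂ) * a^2 * f) * hy3 + ((-1:ℂ) * f + (2:ℂ) * f * y + (6:ℂ) * f * x^2 + (1:ℂ) * b + (-4:ℂ) * b * x^2 + (2:ℂ) * b * e * x + (-2:ℂ) * a * f * x) * hbc + ((-4:ℂ) * b * e * x + (2:ℂ) * b * c * f + (1:ℂ) * b^2 * g + (-1:ℂ) * b^2 * c + (2:ℂ) * a * b * e + (1:ℂ) * a^2 * f + (-1:ℂ) * a^2 * b) * hfg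
    · linear_combination ((2:ℂ) * g * y + (-2:ℂ) * g * x^2 + (2:ℂ) * e * g * x + (-1:ℂ) * c + (-2:ℂ) * c * y + (2:ℂ) * c * x^2 + (-1:ℂ) * c * f * g + (-2:ℂ) * c * e * x + (1:ℂ) * c^2 * f + (-1:ℂ) * b * g^2 + (4:ℂ) * a * g * x + (-2:ℂ) * a * e * g + (-2:ℂ) * a * c * x + (2:ℂ) * a * c * e + (-1:ℂ) * a^2 * g) * hy3 + ((1:ℂ) * g + (2:ℂ) * g * y + (2:ℂ) * g * x^2 + (2:ℂ) * f * g^2 + (-4:ℂ) * e * g * x + (2:ℂ) * e^2 * g + (-1:ℂ) * c * f * g + (-1:ℂ) * c * e^2 + (2:ℂ) * a * g * x) * hbc + ((-2:ℂ) * g + (4:ℂ) * g * x^2 + (1:ℂ) * c + (-4:ℂ) * c * x^2 + (1:ℂ) * c^2 * f + (-2:ℂ) * a * c * x + (2:ℂ) * a * c * e + (-1:ℂ) * a^2 * g) * hfg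
    · linear_combination ((-1:ℂ) * e + (-2:ℂ) * e * y + (2:ℂ) * e * x^2 + (-2:ℂ) * e^2 * x + (1:ℂ) * c * e * f + (1:ℂ) * b * e * g + (1:ℂ) * a + (2:ℂ) * a * y + (-2:ℂ) * a * x^2 + (2:ℂ) * a * e^2 + (-1:ℂ) * a * c * f + (-1:ℂ) * a * b * g + (2:ℂ) * a^2 * x + (-2:ℂ) * a^2 * e) * hy3 + ((1:ℂ) * e + (-2:ℂ) * e^2 * x + (-2:ℂ) * c * f * x + (1:ℂ) * c * e * f + (1:ℂ) * b * e * g + (-1:ℂ) * a + (4:ℂ) * a * x^2 + (-4:ℂ) * a * e * x + (2:ℂ) * a * e^2) * hbc + ((-4:ℂ) * e * x^2 + (2:ℂ) * c * f * x + (-1:ℂ) * b * c * e + (6:ℂ) * a * e * x + (-1:ℂ) * a * c * f + (-1:ℂ) * a * b * g + (1:ℂ) * a * b * c + (-3:ℂ) * a^2 * e + (1:ℂ) * a^3) * hfg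
  rw [hrel, sub_self] at key
  rcases smul_eq_zero.mp key.symm with ht | hd0
  · linear_combination ht
  · exfalso
    have hBA : (!![e, f; g, 2 * x - e] : Matrix (Fin 2) (Fin 2) ℂ) = !![a, b; c, 2 * x - a] :=
      sub_eq_zero.mp hd0
    have he : e = a := by have := congrFun (congrFun hBA 0) 0; simpa using this
    have hf : f = b := by have := congrFun (congrFun hBA 0) 1; simpa using this
    have hg : g = c := by have := congrFun (congrFun hBA 1) 0; simpa using this
    subst he hf hg
    exact hirr (by linear_combination (y + 1 - x ^ 2) / 2 * hy3 - (y + 1 - x ^ 2) * hbc)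
end

section
/- The matrices A = [[1+√5/2, 3/2],[−1/2, −1+√5/2]] and B = [[√5/2, 1/2],[1/2, √5/2]] lie in SL(2,ℝ), satisfy tr(A)=tr(B)=√5, and satisfy the figure-eight knot relation A·(BA⁻¹B⁻¹A) = (BA⁻¹B⁻¹A)·B, thus defining a representation of the figure-eight knot group ⟨a,b | a(ba⁻¹b⁻¹a) = (ba⁻¹b⁻¹a)b⟩ into SL(2,ℝ). -/
open Matrix
set_option maxHeartbeats 1000000

/-- The explicit matrices `A`, `B` lie in `SL(2,ℝ)`, have trace `√5`, and satisfy the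
figure-eight knot relation `A·(BA⁻¹B⁻¹A) = (BA⁻¹B⁻¹A)·B`. -/
theorem figure_eight_explicit_real_representation :
    ∀ A B : Matrix (Fin 2) (Fin 2) ℝ,
      A = !![1 + Real.sqrt 5 / 2, 3 / 2; -(1 / 2), -1 + Real.sqrt 5 / 2] →
      B = !![Real.sqrt 5 / 2, 1 / 2; 1 / 2, Real.sqrt 5 / 2] →
      A.det = 1 ∧ B.det = 1 ∧ A.trace = Real.sqrt 5 ∧ B.trace = Real.sqrt 5 ∧
        A * (B * A⁻¹ * B⁻¹ * A) = (B * A⁻¹ * B⁻¹ * A) * B := by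
  intro A B hA hB
  subst hA hB
  have h5 : Real.sqrt 5 * Real.sqrt 5 = 5 := Real.mul_self_sqrt (by norm_num)
  have hdA : (!![1 + Real.sqrt 5 / 2, 3 / 2; -(1 / 2), -1 + Real.sqrt 5 / 2] :
      Matrix (Fin 2) (Fin 2) ℝ).det = 1 := by
    simp [Matrix.det_fin_two_of]; nlinarith
  have hdB : (!![Real.sqrt 5 / 2, 1 / 2; 1 / 2, Real.sqrt 5 / 2] :
      Matrix (Fin 2) (Fin 2) ℝ).det = 1 := by
    simp [Matrix.det_fin_two_of]; nlinarith
  have hiA : (!![1 + Real.sqrt 5 / 2, 3 / 2; -(1 / 2), -1 + Real.sqrt 5 / 2] :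
      Matrix (Fin 2) (Fin 2) ℝ)⁻¹ =
      !![-1 + Real.sqrt 5 / 2, -(3 / 2); 1 / 2, 1 + Real.sqrt 5 / 2] := by
    rw [Matrix.inv_def, hdA, Matrix.adjugate_fin_two_of]
    norm_num
  have hiB : (!![Real.sqrt 5 / 2, 1 / 2; 1 / 2, Real.sqrt 5 / 2] :
      Matrix (Fin 2) (Fin 2) ℝ)⁻¹ =
      !![Real.sqrt 5 / 2, -(1 / 2); -(1 / 2), Real.sqrt 5 / 2] := by
    rw [Matrix.inv_def, hdB, Matrix.adjugate_fin_two_of]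
    norm_num
  refine ⟨hdA, hdB, ?_, ?_, ?_⟩
  · simp [Matrix.trace_fin_two_of]; try ring
  · simp [Matrix.trace_fin_two_of]; try ring
  · rw [hiA, hiB]
    simp only [Matrix.mul_fin_two]
    ext i j
    fin_cases i <;> fin_cases j <;>
      simp <;> nlinarith [h5, Real.sqrt_nonneg 5]
end
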